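/- arXiv:math/0608432 — 6 statements merged into one kernel-verified Lean document; each statement's English description precedes it below -/
import Mathlib

section
/- Let h be a point of the rotation set φ_*(M_T). If the rotation class φ_*^{-1}(h) consists of a single measure and this measure is ergodic, then h is an extremal point of the rotation set φ_*(M_T). -/
/-!
Convex combinations of invariant measures are invariant and `φ_*` is affine, so a splitting
`h = a h₁ + b h₂` with `hᵢ = φ_*(νᵢ)` lifts to the invariant measure `a ν₁ + b ν₂` in the rotation
class of `h`. That measure must be the unique one, `μ`, and an ergodic measure is an extreme point
of the invariant probability measures, so `ν₁ = μ` and `h₁ = h`.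
-/

open MeasureTheory Filter Topology Metric Set

variable {X : Type*} [MetricSpace X] [CompactSpace X] [MeasurableSpace X] [BorelSpace X]

/-- The set of `T`-invariant Borel probability measures on `X`. -/
def MT (T : X → X) : Set (ProbabilityMeasure X) :=
  {μ | (μ : Measure X).map T = (μ : Measure X)}

/-- The rotation vector `φ_*(μ)` of a measure `μ` with respect to a constraint `φ`. -/
noncomputable def rotv {n : ℕ} (φ : X → EuclideanSpace ℝ (Fin n))
    (μ : ProbabilityMeasure X) : EuclideanSpace ℝ (Fin n) :=
  ∫ x, φ x ∂(μ : Measure X)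

/-- The integral of the potential `A` against a measure. -/
noncomputable def intA (A : X → ℝ) (μ : ProbabilityMeasure X) : ℝ :=
  ∫ x, A x ∂(μ : Measure X)

/-- The beta function `β_{A,φ}(h) = sup {∫ A dμ : μ ∈ M_T, φ_*(μ) = h}`. -/
noncomputable def betaFn {n : ℕ} (T : X → X) (A : X → ℝ)
    (φ : X → EuclideanSpace ℝ (Fin n)) (h : EuclideanSpace ℝ (Fin n)) : ℝ :=
  sSup (intA A '' {μ ∈ MT T | rotv φ μ = h})

/-- The alpha function `α_{A,φ}(c) = min_{h ∈ φ_*(M_T)} (⟨c,h⟩ - β_{A,φ}(h))`. -/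
noncomputable def alphaFn {n : ℕ} (T : X → X) (A : X → ℝ)
    (φ : X → EuclideanSpace ℝ (Fin n)) (c : EuclideanSpace ℝ (Fin n)) : ℝ :=
  sInf ((fun h => (inner ℝ c h : ℝ) - betaFn T A φ h) '' (rotv φ '' MT T))

/-- The set `m_{A,φ}(h)` of `(A,h)`-maximizing measures. -/
noncomputable def mset {n : ℕ} (T : X → X) (A : X → ℝ)
    (φ : X → EuclideanSpace ℝ (Fin n)) (h : EuclideanSpace ℝ (Fin n)) :
    Set (ProbabilityMeasure X) :=
  {μ ∈ MT T | rotv φ μ = h ∧ intA A μ = betaFn T A φ h}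

open scoped ENNReal

section InvariantMeasures

variable {α : Type*} [MeasurableSpace α] {a b : ℝ}

lemma isProbabilityMeasure_ofReal_smul_add (μ ν : Measure α) [IsProbabilityMeasure μ]
    [IsProbabilityMeasure ν] (ha : 0 ≤ a) (hb : 0 ≤ b) (hab : a + b = 1) :
    IsProbabilityMeasure (ENNReal.ofReal a • μ + ENNReal.ofReal b • ν) := by
  constructor
  simp [← ENNReal.ofReal_add ha hb, hab]

lemma integral_ofReal_smul_add {E : Type*} [NormedAddCommGroup E] [NormedSpace ℝ E]
    {μ ν : Measure α} {f : α → E} (hμ : Integrable f μ) (hν : Integrable f ν)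
    (ha : 0 ≤ a) (hb : 0 ≤ b) :
    ∫ x, f x ∂(ENNReal.ofReal a • μ + ENNReal.ofReal b • ν) =
      a • ∫ x, f x ∂μ + b • ∫ x, f x ∂ν := by
  rw [integral_add_measure (hμ.smul_measure ENNReal.ofReal_ne_top)
      (hν.smul_measure ENNReal.ofReal_ne_top), integral_smul_measure, integral_smul_measure,
    ENNReal.toReal_ofReal ha, ENNReal.toReal_ofReal hb]

lemma ofReal_smul_add_mem_openSegment (μ ν : Measure α) (ha : 0 < a) (hb : 0 < b)
    (hab : a + b = 1) :
    ENNReal.ofReal a • μ + ENNReal.ofReal b • ν ∈ openSegment ℝ≥0∞ μ ν :=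
  ⟨_, _, ENNReal.ofReal_pos.2 ha, ENNReal.ofReal_pos.2 hb,
    by rw [← ENNReal.ofReal_add ha.le hb.le, hab, ENNReal.ofReal_one], rfl⟩

lemma mem_MT_iff_measurePreserving {T : α → α} (hT : Measurable T) {ν : ProbabilityMeasure α} :
    ν ∈ MT T ↔ MeasurePreserving T (ν : Measure α) ν :=
  ⟨fun hν ↦ ⟨hT, hν⟩, MeasurePreserving.map_eq⟩

end InvariantMeasures

section RotationSet

variable {T : X → X} {n : ℕ} {φ : X → EuclideanSpace ℝ (Fin n)}

lemma exists_mem_MT_rotv_eq_of_mem_openSegment (hT : Measurable T) (hφ : Continuous φ)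
    {ν₁ ν₂ : ProbabilityMeasure X} (hν₁ : ν₁ ∈ MT T) (hν₂ : ν₂ ∈ MT T)
    {h : EuclideanSpace ℝ (Fin n)}
    (hh : h ∈ openSegment ℝ (rotv φ ν₁) (rotv φ ν₂)) :
    ∃ ν ∈ MT T, rotv φ ν = h ∧ (ν : Measure X) ∈ openSegment ℝ≥0∞ (ν₁ : Measure X) ν₂ := by
  obtain ⟨a, b, ha, hb, hab, rfl⟩ := hh
  have := isProbabilityMeasure_ofReal_smul_add (ν₁ : Measure X) ν₂ ha.le hb.le hab
  have hint (ν : ProbabilityMeasure X) : Integrable φ (ν : Measure X) :=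
    hφ.integrable_of_hasCompactSupport (HasCompactSupport.of_compactSpace φ)
  rw [mem_MT_iff_measurePreserving hT] at hν₁ hν₂
  exact ⟨⟨_, this⟩, (mem_MT_iff_measurePreserving hT).2 <|
      (hν₁.smul_measure _).add_measure (hν₂.smul_measure _),
    integral_ofReal_smul_add (hint ν₁) (hint ν₂) ha.le hb.le,
    ofReal_smul_add_mem_openSegment _ _ ha hb hab⟩

end RotationSet

/-- if the rotation class of `h` is the singleton `{μ}` and `μ` is ergodic,
then `h` is an extremal point of the rotation set `φ_*(M_T)`. -/
theorem stmt0 {n : ℕ} (T : X → X) (hT : Continuous T)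
    (φ : X → EuclideanSpace ℝ (Fin n)) (hφ : Continuous φ)
    (h : EuclideanSpace ℝ (Fin n)) (hh : h ∈ rotv φ '' MT T)
    (μ : ProbabilityMeasure X)
    (hfib : {ν ∈ MT T | rotv φ ν = h} = {μ})
    (herg : Ergodic T (μ : Measure X)) :
    h ∈ Set.extremePoints ℝ (rotv φ '' MT T) := by
  refine ⟨hh, ?_⟩
  rintro _ ⟨ν₁, hν₁, rfl⟩ _ ⟨ν₂, hν₂, rfl⟩ hseg
  obtain ⟨ν, hν, hνh, hνseg⟩ :=
    exists_mem_MT_rotv_eq_of_mem_openSegment hT.measurable hφ hν₁ hν₂ hseg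
  have hνμ : ν = μ := by
    simpa only [hfib, mem_singleton_iff] using (show ν ∈ {ν ∈ MT T | rotv φ ν = h} from ⟨hν, hνh⟩)
  have hν₁μ : (ν₁ : Measure X) = μ := by
    rw [mem_MT_iff_measurePreserving hT.measurable] at hν₁ hν₂
    exact (herg.mem_extremePoints).2 ⟨hν₁, inferInstance⟩ ⟨hν₂, inferInstance⟩ (hνμ ▸ hνseg)
  rw [← hνh, hνμ, rotv, hν₁μ, rotv]
end

section
/- If h is an extremal point of the rotation set φ_*(M_T), then every extremal point of the rotation class φ_*^{-1}(h) is an ergodic measure. -/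
open MeasureTheory Filter Topology Metric Set

variable {X : Type*} [MetricSpace X] [CompactSpace X] [MeasurableSpace X] [BorelSpace X]

/-!
If an invariant set `s` has `0 < μ s < 1`, then `μ = μ(s) • μ[|s] + μ(sᶜ) • μ[|sᶜ]` is a nontrivial
convex combination of two invariant probability measures. Integrating `φ` is affine in the
measure, so `h` lies in the open segment between the rotation vectors of the two pieces;
extremality of `h` puts both pieces in the rotation class of `h`, and extremality of `μ` there
forces `μ[|s] = μ`, contradicting `μ[s|s] = 1 > μ s`.
-/

open ProbabilityTheory
open scoped NNReal ENNReal

section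

variable {α : Type*} [MeasurableSpace α]

theorem ProbabilityTheory.measure_smul_cond {μ : Measure α} {s : Set α} (hs : μ s ≠ ∞) :
    μ s • μ[|s] = μ.restrict s := by
  by_cases h₀ : μ s = 0
  · rw [h₀, zero_smul, Measure.restrict_eq_zero.mpr h₀]
  · rw [ProbabilityTheory.cond, smul_smul, ENNReal.mul_inv_cancel h₀ hs, one_smul]

theorem ProbabilityTheory.measure_eq_smul_cond_add_smul_cond_compl (μ : Measure α)
    [IsFiniteMeasure μ] {s : Set α} (hs : MeasurableSet s) :
    μ = μ s • μ[|s] + μ sᶜ • μ[|sᶜ] := by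
  rw [measure_smul_cond (measure_ne_top μ s), measure_smul_cond (measure_ne_top μ sᶜ),
    Measure.restrict_add_restrict_compl hs]

theorem MeasureTheory.MeasurePreserving.cond_of_preimage_eq {T : α → α} {μ : Measure α}
    (hT : MeasurePreserving T μ μ) {s : Set α} (hs : MeasurableSet s) (hTs : T ⁻¹' s = s) :
    MeasurePreserving T μ[|s] μ[|s] := by
  have hres := hT.restrict_preimage hs
  rw [hTs] at hres
  exact ⟨hT.measurable, by rw [ProbabilityTheory.cond, Measure.map_smul, hres.map_eq]⟩

theorem MeasureTheory.integral_smul_add_smul_measure {E : Type*} [NormedAddCommGroup E]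
    [NormedSpace ℝ E] {f : α → E} {ν₁ ν₂ : Measure α} (h₁ : Integrable f ν₁)
    (h₂ : Integrable f ν₂) (a b : ℝ≥0) :
    ∫ x, f x ∂(a • ν₁ + b • ν₂) = (a : ℝ) • ∫ x, f x ∂ν₁ + (b : ℝ) • ∫ x, f x ∂ν₂ := by
  rw [integral_add_measure (h₁.smul_measure_nnreal) (h₂.smul_measure_nnreal),
    integral_smul_nnreal_measure, integral_smul_nnreal_measure, NNReal.smul_def, NNReal.smul_def]

theorem ergodic_of_forall_convex_combination_eq {T : α → α} {μ : Measure α}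
    [IsProbabilityMeasure μ] (hT : MeasurePreserving T μ μ)
    (hμ : ∀ ν₁ ν₂ : ProbabilityMeasure α, MeasurePreserving T ν₁ ν₁ →
      MeasurePreserving T ν₂ ν₂ → ∀ t : ℝ≥0, 0 < t → t < 1 →
        μ = t • (ν₁ : Measure α) + (1 - t) • (ν₂ : Measure α) → (ν₁ : Measure α) = μ) :
    Ergodic T μ := by
  refine ⟨hT, ⟨fun s hs hTs => ?_⟩⟩
  rw [eventuallyConst_set', ae_eq_empty, ae_eq_univ]
  by_contra! ⟨h₀, h₁⟩
  have hTsc : T ⁻¹' sᶜ = sᶜ := by rw [preimage_compl, hTs]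
  have := cond_isProbabilityMeasure h₀
  have := cond_isProbabilityMeasure h₁
  set t := (μ s).toNNReal
  have hts : (t : ℝ≥0∞) = μ s := ENNReal.coe_toNNReal (measure_ne_top _ s)
  have hslt : μ s < 1 := by
    rw [← tsub_pos_iff_lt, ← prob_compl_eq_one_sub hs]
    exact pos_iff_ne_zero.mpr h₁
  have ht₀ : 0 < t := ENNReal.toNNReal_pos h₀ (measure_ne_top _ s)
  have ht₁ : t < 1 := by rwa [← ENNReal.coe_lt_one_iff, hts]
  have hcompl : ((1 - t : ℝ≥0) : ℝ≥0∞) = μ sᶜ := by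
    rw [ENNReal.coe_sub, hts, ENNReal.coe_one, prob_compl_eq_one_sub hs]
  let ν₁ : ProbabilityMeasure α := ⟨μ[|s], inferInstance⟩
  let ν₂ : ProbabilityMeasure α := ⟨μ[|sᶜ], inferInstance⟩
  have hdec : μ = t • (ν₁ : Measure α) + (1 - t) • (ν₂ : Measure α) := by
    rw [ENNReal.smul_def, ENNReal.smul_def, hts, hcompl]
    exact measure_eq_smul_cond_add_smul_cond_compl μ hs
  have hν₁ : (ν₁ : Measure α) = μ := hμ ν₁ ν₂ (hT.cond_of_preimage_eq hs hTs)
    (hT.cond_of_preimage_eq hs.compl hTsc) t ht₀ ht₁ hdec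
  have hcond : (ν₁ : Measure α) s = 1 := cond_apply_self h₀ (measure_ne_top _ s)
  rw [hν₁] at hcond
  exact hslt.ne hcond

end

theorem rotv_eq_of_mem_extremePoints {n : ℕ} {T : X → X} {φ : X → EuclideanSpace ℝ (Fin n)}
    (hφ : Continuous φ) {h : EuclideanSpace ℝ (Fin n)}
    (hh : h ∈ Set.extremePoints ℝ (rotv φ '' MT T)) {μ ν₁ ν₂ : ProbabilityMeasure X}
    (hμ : rotv φ μ = h) (hν₁ : ν₁ ∈ MT T) (hν₂ : ν₂ ∈ MT T) {t : ℝ≥0} (ht₀ : 0 < t)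
    (ht₁ : t < 1) (hdec : (μ : Measure X) = t • (ν₁ : Measure X) + (1 - t) • (ν₂ : Measure X)) :
    rotv φ ν₁ = h ∧ rotv φ ν₂ = h := by
  have hint (ν : ProbabilityMeasure X) : Integrable φ ν :=
    hφ.integrable_of_hasCompactSupport (.of_compactSpace φ)
  have hseg : h ∈ openSegment ℝ (rotv φ ν₁) (rotv φ ν₂) := by
    refine ⟨t, (1 - t : ℝ≥0), ht₀, tsub_pos_of_lt ht₁, ?_, ?_⟩
    · rw [NNReal.coe_sub ht₁.le, NNReal.coe_one, add_sub_cancel]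
    · rw [← hμ]
      unfold rotv
      rw [hdec, integral_smul_add_smul_measure (hint ν₁) (hint ν₂)]
  exact (mem_extremePoints.mp hh).2 _ ⟨ν₁, hν₁, rfl⟩ _ ⟨ν₂, hν₂, rfl⟩ hseg

/-- if `h` is an extremal point of the rotation set `φ_*(M_T)`, then every
extremal point `μ` of the rotation class `φ_*^{-1}(h)` is an ergodic measure.  Extremality
of `μ` in the (convex) rotation class is expressed by: whenever `μ` is a nontrivial convex
combination `t • ν₁ + (1-t) • ν₂` of two members of the class, then `ν₁ = μ` and `ν₂ = μ`. -/
theorem stmt1 {n : ℕ} (T : X → X) (hT : Continuous T)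
    (φ : X → EuclideanSpace ℝ (Fin n)) (hφ : Continuous φ)
    (h : EuclideanSpace ℝ (Fin n))
    (hh : h ∈ Set.extremePoints ℝ (rotv φ '' MT T))
    (μ : ProbabilityMeasure X) (hμT : μ ∈ MT T) (hμh : rotv φ μ = h)
    (hext : ∀ ν₁ ∈ {ν ∈ MT T | rotv φ ν = h}, ∀ ν₂ ∈ {ν ∈ MT T | rotv φ ν = h},
      ∀ t : NNReal, 0 < t → t < 1 →
        (μ : Measure X) = t • (ν₁ : Measure X) + (1 - t) • (ν₂ : Measure X) →
        ν₁ = μ ∧ ν₂ = μ) :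
    Ergodic T (μ : Measure X) := by
  refine ergodic_of_forall_convex_combination_eq ⟨hT.measurable, hμT⟩
    fun ν₁ ν₂ h₁ h₂ t ht₀ ht₁ hdec => ?_
  obtain ⟨hr₁, hr₂⟩ := rotv_eq_of_mem_extremePoints hφ hh hμh h₁.map_eq h₂.map_eq ht₀ ht₁ hdec
  exact congrArg Subtype.val (hext ν₁ ⟨h₁.map_eq, hr₁⟩ ν₂ ⟨h₂.map_eq, hr₂⟩ t ht₀ ht₁ hdec).1
end

section
/- Let U ⊂ C⁰(X,X) carry the topology induced by the supremum metric, and let T ∈ U ↦ φ_T ∈ C⁰(X,ℝ^n) be a continuous assignment. Then the application Γ_U : U → K(ℝ^n) defined by Γ_U(T) = (φ_T)_*(M_T) is upper semi-continuous: for every T ∈ U and ε > 0 there is a neighborhood V of T in U such that Γ_U(S) is contained in the open ε-neighborhood of Γ_U(T) for every S ∈ V. -/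
/-!
Jointly in `(S, μ) ∈ C⁰(X,X) × P(X)`, both the push-forward `S_*μ` and `∫ φ_S dμ` are
continuous: the integrand moves uniformly, while `μ ↦ ∫ g dμ` is weak* continuous for each
fixed `g`. Hence the graph `{(S, μ) | μ ∈ M_S}` is closed. Around each `(T, μ)` the implication
`μ' ∈ M_S → (φ_S)_*(μ') ∈ thickening ε Γ(T)` holds eventually: by continuity if `μ ∈ M_T`,
and because the complement of the graph is open otherwise. Compactness of `P(X)` (tube lemma)
makes this uniform in `μ`.
-/

open MeasureTheory Filter Topology Metric Set

variable {X : Type*} [MetricSpace X] [CompactSpace X] [MeasurableSpace X] [BorelSpace X]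

section IntegralContinuity

variable {Ω : Type*} [TopologicalSpace Ω] [CompactSpace Ω] [MeasurableSpace Ω]
  [OpensMeasurableSpace Ω] {E : Type*} [NormedAddCommGroup E]

lemma ContinuousMap.integrable_of_compactSpace (g : C(Ω, E)) (μ : Measure Ω)
    [IsFiniteMeasure μ] : Integrable g μ :=
  g.continuous.integrable_of_hasCompactSupport (.of_compactSpace _)

variable [NormedSpace ℝ E]

lemma norm_integral_sub_le_dist (f g : C(Ω, E)) (μ : ProbabilityMeasure Ω) :
    ‖∫ x, f x ∂μ - ∫ x, g x ∂μ‖ ≤ dist f g := by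
  rw [← integral_sub (f.integrable_of_compactSpace _) (g.integrable_of_compactSpace _)]
  simpa using norm_integral_le_of_norm_le_const (μ := (μ : Measure Ω))
    (Eventually.of_forall fun x => (dist_eq_norm (f x) (g x)).symm.trans_le
      (ContinuousMap.dist_apply_le_dist x))

variable [FiniteDimensional ℝ E]

lemma ProbabilityMeasure.continuous_integral_continuousMap_of_finiteDimensional (g : C(Ω, E)) :
    Continuous fun μ : ProbabilityMeasure Ω => ∫ x, g x ∂μ := by
  let e := (Module.finBasis ℝ E).equivFunL
  refine e.comp_continuous_iff.1 (continuous_pi fun i => ?_)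
  let ℓ : E →L[ℝ] ℝ :=
    (ContinuousLinearMap.proj (R := ℝ) (φ := fun _ => ℝ) i).comp (e : E →L[ℝ] _)
  have hℓ : ∀ μ : ProbabilityMeasure Ω,
      e (∫ x, g x ∂(μ : Measure Ω)) i = ∫ x, ℓ (g x) ∂(μ : Measure Ω) :=
    fun μ => (ℓ.integral_comp_comm (g.integrable_of_compactSpace _)).symm
  simp only [Function.comp_def, hℓ]
  exact ProbabilityMeasure.continuous_integral_continuousMap ((ℓ : C(E, ℝ)).comp g)

lemma continuousAt_integral_prod {Y : Type*} [TopologicalSpace Y] {F : Y → C(Ω, E)} {y₀ : Y}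
    (hF : ContinuousAt F y₀) (μ₀ : ProbabilityMeasure Ω) :
    ContinuousAt (fun p : Y × ProbabilityMeasure Ω => ∫ x, F p.1 x ∂p.2) (y₀, μ₀) := by
  show Tendsto _ _ _
  have hfixed : Tendsto (fun p : Y × ProbabilityMeasure Ω => ∫ x, F y₀ x ∂p.2)
      (𝓝 (y₀, μ₀)) (𝓝 (∫ x, F y₀ x ∂μ₀)) :=
    ((ProbabilityMeasure.continuous_integral_continuousMap_of_finiteDimensional (F y₀)).comp
      continuous_snd).continuousAt
  have hmoving : Tendsto (fun p : Y × ProbabilityMeasure Ω =>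
      ∫ x, F p.1 x ∂p.2 - ∫ x, F y₀ x ∂p.2) (𝓝 (y₀, μ₀)) (𝓝 0) :=
    squeeze_zero_norm (fun p => norm_integral_sub_le_dist (F p.1) (F y₀) p.2)
      (tendsto_iff_dist_tendsto_zero.1 (hF.tendsto.comp continuousAt_fst))
  simpa using hmoving.add hfixed

lemma ProbabilityMeasure.continuous_map_prod {Ω' : Type*} [TopologicalSpace Ω']
    [MeasurableSpace Ω'] [BorelSpace Ω'] :
    Continuous fun p : C(Ω, Ω') × ProbabilityMeasure Ω =>
      p.2.map p.1.continuous.aemeasurable := by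
  refine continuous_iff_continuousAt.2 fun ⟨S, μ⟩ =>
    ProbabilityMeasure.tendsto_iff_forall_integral_tendsto.2 fun f => ?_
  have hcomp : ∀ (S : C(Ω, Ω')) (μ : ProbabilityMeasure Ω),
      ∫ y, f y ∂(μ.map S.continuous.aemeasurable : Measure Ω') = ∫ x, f (S x) ∂μ :=
    fun S μ => by
      rw [ProbabilityMeasure.toMeasure_map]
      exact integral_map S.continuous.aemeasurable f.continuous.aestronglyMeasurable
  simp only [hcomp]
  exact continuousAt_integral_prod (F := fun S : C(Ω, Ω') => f.toContinuousMap.comp S)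
    (y₀ := S) (ContinuousMap.continuous_postcomp _).continuousAt μ

end IntegralContinuity

lemma isClosed_setOf_mem_MT :
    IsClosed {p : C(X, X) × ProbabilityMeasure X | p.2 ∈ MT p.1} := by
  have hMT : ∀ p : C(X, X) × ProbabilityMeasure X,
      p.2 ∈ MT p.1 ↔ p.2.map p.1.continuous.aemeasurable = p.2 := fun p => by
    rw [← ProbabilityMeasure.toMeasure_injective.eq_iff, ProbabilityMeasure.toMeasure_map]
    rfl
  simp only [hMT]
  exact isClosed_eq ProbabilityMeasure.continuous_map_prod continuous_snd

/-- if `T ∈ U ↦ φ_T` is a continuous assignment of constraints to maps of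
`U ⊆ C⁰(X,X)`, then `Γ_U(T) = (φ_T)_*(M_T)` is upper semi-continuous: for `T ∈ U` and `ε > 0`
there is a neighborhood of `T` in `U` whose image under `Γ_U` consists of sets contained in
the open `ε`-neighborhood of `Γ_U(T)`. -/
theorem stmt6 {n : ℕ} (U : Set C(X, X))
    (Φ : C(X, X) → C(X, EuclideanSpace ℝ (Fin n))) (hΦ : ContinuousOn Φ U)
    (T : C(X, X)) (hT : T ∈ U) (ε : ℝ) (hε : 0 < ε) :
    ∃ δ > 0, ∀ S ∈ U, dist S T < δ →
      rotv (⇑(Φ S)) '' MT (⇑S) ⊆ Metric.thickening ε (rotv (⇑(Φ T)) '' MT (⇑T)) := by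
  set W := thickening ε (rotv (Φ T) '' MT T)
  have hlocal : ∀ μ : ProbabilityMeasure X,
      ∀ᶠ p : U × ProbabilityMeasure X in 𝓝 (⟨T, hT⟩, μ), p.2 ∈ MT p.1 → rotv (Φ p.1) p.2 ∈ W := by
    intro μ
    by_cases hμ : μ ∈ MT T
    · have hW : W ∈ 𝓝 (rotv (Φ T) μ) :=
        isOpen_thickening.mem_nhds (self_subset_thickening hε _ ⟨μ, hμ, rfl⟩)
      exact ((continuousAt_integral_prod (F := fun S : U => Φ S)
        hΦ.domRestrict.continuousAt μ).eventually_mem hW).mono fun _ h _ => h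
    · have hgraph : IsClosed {p : U × ProbabilityMeasure X | p.2 ∈ MT p.1} :=
        isClosed_setOf_mem_MT.preimage (continuous_subtype_val.prodMap continuous_id)
      exact Eventually.mono (hgraph.isOpen_compl.mem_nhds
        (show ((⟨T, hT⟩, μ) : U × ProbabilityMeasure X) ∉ _ from hμ))
        fun _ h h' => absurd h' h
  obtain ⟨δ, hδ, hnear⟩ := Metric.eventually_nhds_iff.1
    (isCompact_univ.eventually_forall_of_forall_eventually (x₀ := (⟨T, hT⟩ : U))
      (P := fun S μ => μ ∈ MT S.1 → rotv (Φ S.1) μ ∈ W) fun μ _ => hlocal μ)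
  refine ⟨δ, hδ, ?_⟩
  rintro S hS hST _ ⟨μ, hμ, rfl⟩
  exact hnear (y := ⟨S, hS⟩) hST μ trivial hμ
end

section
/- Fix a continuous potential A : X → ℝ and a constraint φ ∈ C⁰(X,ℝ^n), and take h ∈ φ_*(M_T). Let {φ_j} be a sequence of constraints converging uniformly to φ, and let {h_j} ⊂ ℝ^n satisfy h_j ∈ (φ_j)_*(φ_*^{-1}(h)) for each j. Then lim_{j→∞} d(h, φ_*(m_{A,φ_j}(h_j))) = 0. -/
open MeasureTheory Filter Topology Metric Set

/-!
Replacing the constraint `φ` by `φ_j` moves every rotation vector by at most `‖φ_j - φ‖_∞`.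
Pick `ν ∈ φ_*⁻¹(h)` with `(φ_j)_*(ν) = h_j`. Every `μ ∈ m_{A,φ_j}(h_j)` has `(φ_j)_*(μ) = h_j`
as well, so `φ_*(μ)` and `φ_*(ν) = h` both lie within `‖φ_j - φ‖_∞` of `h_j`, whence
`d(h, φ_*(m_{A,φ_j}(h_j))) ≤ 2 ‖φ_j - φ‖_∞ → 0`.
-/

variable {X : Type*} [MetricSpace X] [CompactSpace X] [MeasurableSpace X] [BorelSpace X]

lemma dist_integral_le_dist {Y E : Type*} [TopologicalSpace Y] [CompactSpace Y]
    [MeasurableSpace Y] [OpensMeasurableSpace Y] [NormedAddCommGroup E] [NormedSpace ℝ E]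
    (μ : Measure Y) [IsProbabilityMeasure μ] (f g : C(Y, E)) :
    dist (∫ x, f x ∂μ) (∫ x, g x ∂μ) ≤ dist f g := by
  have integrable (u : C(Y, E)) : Integrable u μ :=
    u.continuous.integrable_of_hasCompactSupport (HasCompactSupport.of_compactSpace _)
  rw [dist_eq_norm, ← integral_sub (integrable f) (integrable g)]
  simpa using norm_integral_le_of_norm_le_const (μ := μ) (f := fun x => f x - g x)
    (Eventually.of_forall fun x => by
      simpa [dist_eq_norm] using ContinuousMap.dist_apply_le_dist (f := f) (g := g) x)

lemma dist_rotv_le_dist {n : ℕ} (φ ψ : C(X, EuclideanSpace ℝ (Fin n)))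
    (μ : ProbabilityMeasure X) : dist (rotv φ μ) (rotv ψ μ) ≤ dist φ ψ :=
  dist_integral_le_dist (μ : Measure X) φ ψ

lemma infDist_rotv_image_le_of_rotv_eq {n : ℕ} (φ ψ : C(X, EuclideanSpace ℝ (Fin n)))
    (S : Set (ProbabilityMeasure X)) (ν : ProbabilityMeasure X)
    (hS : ∀ μ ∈ S, rotv ψ μ = rotv ψ ν) :
    infDist (rotv φ ν) (rotv φ '' S) ≤ 2 * dist ψ φ := by
  rcases S.eq_empty_or_nonempty with rfl | ⟨μ, hμ⟩
  · simp
  calc infDist (rotv φ ν) (rotv φ '' S)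
      ≤ dist (rotv φ ν) (rotv φ μ) := infDist_le_dist_of_mem (mem_image_of_mem _ hμ)
    _ ≤ dist (rotv φ ν) (rotv ψ ν) + dist (rotv ψ μ) (rotv φ μ) := by
        rw [hS μ hμ]; exact dist_triangle _ _ _
    _ ≤ dist ψ φ + dist ψ φ := by
        gcongr
        · rw [dist_comm ψ]; exact dist_rotv_le_dist φ ψ ν
        · exact dist_rotv_le_dist ψ φ μ
    _ = 2 * dist ψ φ := by ring

theorem stmt8_general {n : ℕ} (T : X → X) (A : X → ℝ)
    (φ : C(X, EuclideanSpace ℝ (Fin n))) (φseq : ℕ → C(X, EuclideanSpace ℝ (Fin n)))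
    (hconv : Tendsto φseq atTop (𝓝 φ))
    (h : EuclideanSpace ℝ (Fin n))
    (hseq : ℕ → EuclideanSpace ℝ (Fin n))
    (hhj : ∀ j, hseq j ∈ rotv (⇑(φseq j)) '' {μ ∈ MT T | rotv (⇑φ) μ = h}) :
    Tendsto (fun j => infDist h (rotv (⇑φ) '' mset T A (⇑(φseq j)) (hseq j)))
      atTop (𝓝 0) := by
  have hbound (j : ℕ) :
      infDist h (rotv φ '' mset T A (φseq j) (hseq j)) ≤ 2 * dist (φseq j) φ := by
    obtain ⟨ν, ⟨-, rfl⟩, hν⟩ := hhj j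
    exact infDist_rotv_image_le_of_rotv_eq φ (φseq j) _ ν fun μ hμ => hμ.2.1.trans hν.symm
  have hdist : Tendsto (fun j => 2 * dist (φseq j) φ) atTop (𝓝 0) := by
    simpa using (tendsto_iff_dist_tendsto_zero.mp hconv).const_mul 2
  exact squeeze_zero (fun _ => infDist_nonneg) hbound hdist

/-- if `φ_j → φ` uniformly, `h ∈ φ_*(M_T)` and `h_j ∈ (φ_j)_*(φ_*^{-1}(h))`
for each `j`, then `d(h, φ_*(m_{A,φ_j}(h_j))) → 0`. -/
theorem stmt8 {n : ℕ} (T : X → X) (hT : Continuous T) (A : X → ℝ) (hA : Continuous A)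
    (φ : C(X, EuclideanSpace ℝ (Fin n))) (φseq : ℕ → C(X, EuclideanSpace ℝ (Fin n)))
    (hconv : Tendsto φseq atTop (𝓝 φ))
    (h : EuclideanSpace ℝ (Fin n)) (hh : h ∈ rotv (⇑φ) '' MT T)
    (hseq : ℕ → EuclideanSpace ℝ (Fin n))
    (hhj : ∀ j, hseq j ∈ rotv (⇑(φseq j)) '' {μ ∈ MT T | rotv (⇑φ) μ = h}) :
    Tendsto (fun j => infDist h (rotv (⇑φ) '' mset T A (⇑(φseq j)) (hseq j)))
      atTop (𝓝 0) :=
  stmt8_general T A φ φseq hconv h hseq hhj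
end

section
/- Let (Y,B,ν) be a probability space, F : Y → Y an ergodic measure-preserving transformation, and f : Y → ℝ^n an integrable function such that lim_{k→∞} k^{-1/n} ‖S_k f(y) − k f_*(ν)‖ = 0 for ν-almost every y ∈ Y. Then f is joint recurrent with respect to ν, i.e., ν(Ξ(D)) = ν(D) for every D ∈ B. -/
/-! Fix `ε > 0` and let `A` be the set of points of `D` all of whose returns to `D` carry a
centred Birkhoff sum of norm at least `ε`. Along any orbit, the Birkhoff sums at the times of
visits to `A` are `ε`-separated in `ℝⁿ`. On the set where the sums grow at most like
`η k^{1/n} + C`, the sums at the visit times before `N` lie in a ball of radius `η N^{1/n} + C`,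
so comparing volumes bounds the number of such visits by about `N (2η/ε)ⁿ`. Since `F` preserves
the measure, integrating this count bounds the measure of that part of `A` by `(2η/ε)ⁿ`. The growth
hypothesis says these sets exhaust `A` almost surely as `C → ∞`, and `η → 0` gives `ν A = 0`. -/

open MeasureTheory Filter Topology Metric Module Finset
open scoped ENNReal

theorem card_mul_pow_le_of_pairwise_le_dist {E ι : Type*} [NormedAddCommGroup E]
    [NormedSpace ℝ E] [FiniteDimensional ℝ E] {s : Finset ι} {u : ι → E} {c : E} {ε R : ℝ}
    (hε : 0 < ε) (hR : 0 ≤ R) (hsep : (s : Set ι).Pairwise fun a b => ε ≤ dist (u a) (u b))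
    (hs : ∀ a ∈ s, dist (u a) c ≤ R) :
    (#s : ℝ) * (ε / 2) ^ finrank ℝ E ≤ (R + ε / 2) ^ finrank ℝ E := by
  borelize E
  let μ : Measure E := Measure.addHaar
  have hε2 : 0 < ε / 2 := half_pos hε
  have hdisj : (s : Set ι).PairwiseDisjoint fun a => ball (u a) (ε / 2) :=
    fun a ha b hb hab => ball_disjoint_ball (by rw [add_halves]; exact hsep ha hb hab)
  have hsub : (⋃ a ∈ s, ball (u a) (ε / 2)) ⊆ ball c (R + ε / 2) :=
    Set.iUnion₂_subset fun a ha => ball_subset_ball' (by linarith [hs a ha])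
  have hvol : (#s : ℝ≥0∞) * ENNReal.ofReal ((ε / 2) ^ finrank ℝ E) * μ (ball 0 1)
      ≤ ENNReal.ofReal ((R + ε / 2) ^ finrank ℝ E) * μ (ball 0 1) := calc
    _ = μ (⋃ a ∈ s, ball (u a) (ε / 2)) := by
      rw [measure_biUnion_finset hdisj fun a _ => measurableSet_ball]
      simp only [μ.addHaar_ball_of_pos _ hε2, sum_const, nsmul_eq_mul, mul_assoc]
    _ ≤ μ (ball c (R + ε / 2)) := measure_mono hsub
    _ = _ := μ.addHaar_ball_of_pos _ (by linarith)
  have hvol' := (ENNReal.mul_le_mul_iff_left (measure_ball_pos μ _ one_pos).ne'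
    measure_ball_lt_top.ne).1 hvol
  have := ENNReal.toReal_le_of_le_ofReal (by positivity) hvol'
  rwa [ENNReal.toReal_mul, ENNReal.toReal_ofReal (by positivity), ENNReal.toReal_natCast] at this

theorem exists_nat_forall_le_add_of_eventually_le {a b : ℕ → ℝ}
    (h : ∀ᶠ k in atTop, a k ≤ b k) : ∃ C : ℕ, ∀ k, a k ≤ b k + C := by
  obtain ⟨K, hK⟩ := eventually_atTop.1 h
  obtain ⟨C₀, hC₀⟩ := ((range K).image fun k => a k - b k).bddAbove
  obtain ⟨C, hC⟩ := exists_nat_ge C₀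
  refine ⟨C, fun k => ?_⟩
  rcases lt_or_ge k K with hk | hk
  · have := hC₀ (mem_coe.2 (mem_image_of_mem (fun k => a k - b k) (mem_range.2 hk)))
    linarith
  · linarith [hK k hk, (Nat.cast_nonneg C : (0 : ℝ) ≤ C)]

theorem isLittleO_rpow_of_tendsto_rpow_neg_mul_norm {E : Type*} [NormedAddCommGroup E]
    {u : ℕ → E} {p : ℝ}
    (hu : Tendsto (fun k : ℕ => (k : ℝ) ^ (-p) * ‖u k‖) atTop (𝓝 0)) :
    u =o[atTop] fun k : ℕ => (k : ℝ) ^ p := by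
  rw [← Asymptotics.isLittleO_norm_left, Asymptotics.isLittleO_iff_tendsto']
  · refine hu.congr fun k => ?_
    rw [Real.rpow_neg k.cast_nonneg, div_eq_inv_mul]
  · filter_upwards [eventually_ge_atTop 1] with k hk h0
    exact absurd h0 (Real.rpow_pos_of_pos (by exact_mod_cast hk) p).ne'

theorem rpow_inv_natCast_mul_add_pow {x : ℝ} (hx : 0 < x) {d : ℕ} (hd : d ≠ 0) (a b : ℝ) :
    (a * x ^ (d⁻¹ : ℝ) + b) ^ d = x * (a + b * (x ^ (d⁻¹ : ℝ))⁻¹) ^ d := by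
  have hroot : 0 < x ^ (d⁻¹ : ℝ) := Real.rpow_pos_of_pos hx _
  calc (a * x ^ (d⁻¹ : ℝ) + b) ^ d = (x ^ (d⁻¹ : ℝ) * (a + b * (x ^ (d⁻¹ : ℝ))⁻¹)) ^ d := by
        field_simp
    _ = x * (a + b * (x ^ (d⁻¹ : ℝ))⁻¹) ^ d := by rw [mul_pow, Real.rpow_inv_natCast_pow hx.le hd]

theorem birkhoffSum_sub_birkhoffSum_of_le {α G : Type*} [AddCommGroup G] (f : α → α) (g : α → G)
    {j k : ℕ} (hjk : j ≤ k) (x : α) :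
    birkhoffSum f g k x - birkhoffSum f g j x = birkhoffSum f g (k - j) (f^[j] x) := by
  obtain ⟨i, rfl⟩ := Nat.exists_eq_add_of_le hjk
  rw [birkhoffSum_add, Nat.add_sub_cancel_left, add_sub_cancel_left]

theorem birkhoffSum_sub_const {α G : Type*} [AddCommGroup G] (f : α → α) (g : α → G) (c : G)
    (k : ℕ) (x : α) : birkhoffSum f (fun y => g y - c) k x = birkhoffSum f g k x - k • c := by
  simp [birkhoffSum]

theorem MeasureTheory.MeasurePreserving.natCast_mul_measure_le {Y : Type*} [MeasurableSpace Y]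
    {μ : Measure Y} {F : Y → Y} (hF : MeasurePreserving F μ μ) {s : Set Y}
    (hs : NullMeasurableSet s μ) {N : ℕ} {B : ℝ≥0∞}
    (hB : ∀ y (H : Finset ℕ), (∀ k ∈ H, k < N ∧ F^[k] y ∈ s) → (#H : ℝ≥0∞) ≤ B) :
    N * μ s ≤ B * μ Set.univ := by
  classical
  have hpre : ∀ k, NullMeasurableSet (F^[k] ⁻¹' s) μ :=
    fun k => hs.preimage (hF.iterate k).quasiMeasurePreserving
  calc (N : ℝ≥0∞) * μ s = ∑ k ∈ range N, μ (F^[k] ⁻¹' s) := by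
        simp [(hF.iterate _).measure_preimage hs]
    _ = ∫⁻ y, ∑ k ∈ range N, (F^[k] ⁻¹' s).indicator 1 y ∂μ := by
        rw [lintegral_finsetSum' (f := fun k => (F^[k] ⁻¹' s).indicator 1) _
          fun k _ => aemeasurable_const.indicator₀ (hpre k)]
        simp only [lintegral_indicator_one₀ (hpre _)]
    _ = ∫⁻ y, (#{k ∈ range N | F^[k] y ∈ s} : ℝ≥0∞) ∂μ := by
        simp only [card_filter, Nat.cast_sum, Nat.cast_ite, Nat.cast_one, Nat.cast_zero,
          Set.indicator_apply, Set.mem_preimage, Pi.one_apply]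
    _ ≤ ∫⁻ _, B ∂μ := lintegral_mono fun y => hB y _ fun k hk => by simpa using hk
    _ = B * μ Set.univ := lintegral_const B

namespace JointRecurrence

variable {Y E : Type*} [NormedAddCommGroup E] {F : Y → Y} {h : Y → E} {D : Set Y} {ε η C : ℝ}

section Geometry

-- `D \ Ξ(D)` is the union of `farReturnSet F (f - f_*(ν)) D (1 / (j + 1))` over `j : ℕ`.
variable (F h) in
def farReturnSet (D : Set Y) (ε : ℝ) : Set Y :=
  {z ∈ D | ∀ L, 0 < L → F^[L] z ∈ D → ε ≤ ‖birkhoffSum F h L z‖}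

theorem le_dist_birkhoffSum_of_mem_farReturnSet {y : Y} {j k : ℕ} (hjk : j < k)
    (hj : F^[j] y ∈ farReturnSet F h D ε) (hk : F^[k] y ∈ D) :
    ε ≤ dist (birkhoffSum F h k y) (birkhoffSum F h j y) := by
  rw [dist_eq_norm, birkhoffSum_sub_birkhoffSum_of_le F h hjk.le]
  refine hj.2 (k - j) (Nat.sub_pos_of_lt hjk) ?_
  rwa [← Function.iterate_add_apply, Nat.sub_add_cancel hjk.le]

variable [NormedSpace ℝ E]

variable (F h) in
def rootGrowthSet (η C : ℝ) : Set Y :=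
  {z | ∀ k : ℕ, ‖birkhoffSum F h k z‖ ≤ η * (k : ℝ) ^ (finrank ℝ E : ℝ)⁻¹ + C}

theorem rootGrowthSet_mono {C C' : ℝ} (hCC' : C ≤ C') :
    rootGrowthSet F h η C ⊆ rootGrowthSet F h η C' :=
  fun _ hz k => (hz k).trans (by linarith)

theorem dist_birkhoffSum_le_of_mem_rootGrowthSet {y : Y} {j k : ℕ} (hjk : j ≤ k)
    (hj : F^[j] y ∈ rootGrowthSet F h η C) :
    dist (birkhoffSum F h k y) (birkhoffSum F h j y)
      ≤ η * ((k - j : ℕ) : ℝ) ^ (finrank ℝ E : ℝ)⁻¹ + C := by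
  rw [dist_eq_norm, birkhoffSum_sub_birkhoffSum_of_le F h hjk]
  exact hj (k - j)

theorem exists_nat_mem_rootGrowthSet {y : Y} (hη : 0 < η)
    (hy : (fun k => birkhoffSum F h k y) =o[atTop] fun k : ℕ => (k : ℝ) ^ (finrank ℝ E : ℝ)⁻¹) :
    ∃ C : ℕ, y ∈ rootGrowthSet F h η C := by
  refine exists_nat_forall_le_add_of_eventually_le ((hy.bound hη).mono fun k hk => ?_)
  rwa [Real.norm_of_nonneg (by positivity)] at hk

variable [FiniteDimensional ℝ E]

theorem card_mul_pow_le_of_forall_mem (hε : 0 < ε) (hη : 0 ≤ η) (hC : 0 ≤ C) {N : ℕ} {y : Y}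
    {H : Finset ℕ}
    (hH : ∀ k ∈ H, k < N ∧ F^[k] y ∈ farReturnSet F h D ε ∩ rootGrowthSet F h η C) :
    (#H : ℝ) * (ε / 2) ^ finrank ℝ E
      ≤ (η * (N : ℝ) ^ (finrank ℝ E : ℝ)⁻¹ + C + ε / 2) ^ finrank ℝ E := by
  rcases H.eq_empty_or_nonempty with rfl | hne
  · simp only [card_empty, Nat.cast_zero, zero_mul]
    positivity
  have hsep : (H : Set ℕ).Pairwise fun a b =>
      ε ≤ dist (birkhoffSum F h a y) (birkhoffSum F h b y) := by
    intro a ha b hb hab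
    rcases hab.lt_or_gt with hlt | hlt
    · rw [dist_comm]
      exact le_dist_birkhoffSum_of_mem_farReturnSet hlt (hH a ha).2.1 (hH b hb).2.1.1
    · exact le_dist_birkhoffSum_of_mem_farReturnSet hlt (hH b hb).2.1 (hH a ha).2.1.1
  have hball : ∀ k ∈ H, dist (birkhoffSum F h k y) (birkhoffSum F h (H.min' hne) y)
      ≤ η * (N : ℝ) ^ (finrank ℝ E : ℝ)⁻¹ + C := by
    intro k hk
    refine (dist_birkhoffSum_le_of_mem_rootGrowthSet (H.min'_le k hk)
      (hH _ (H.min'_mem hne)).2.2).trans ?_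
    gcongr
    exact_mod_cast (Nat.sub_le _ _).trans (hH k hk).1.le
  exact card_mul_pow_le_of_pairwise_le_dist hε (by positivity) hsep hball

end Geometry

section Measure

variable [MeasurableSpace Y] {μ : Measure Y}

theorem aestronglyMeasurable_birkhoffSum (hF : MeasurePreserving F μ μ)
    (hh : AEStronglyMeasurable h μ) (k : ℕ) : AEStronglyMeasurable (birkhoffSum F h k) μ :=
  Finset.aestronglyMeasurable_fun_sum _ fun j _ =>
    hh.comp_quasiMeasurePreserving (hF.iterate j).quasiMeasurePreserving

theorem nullMeasurableSet_farReturnSet (hF : MeasurePreserving F μ μ)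
    (hh : AEStronglyMeasurable h μ) (hD : MeasurableSet D) :
    NullMeasurableSet (farReturnSet F h D ε) μ := by
  have : farReturnSet F h D ε
      = D ∩ ⋂ L, ⋂ (_ : 0 < L), (F^[L] ⁻¹' D)ᶜ ∪ {z | ε ≤ ‖birkhoffSum F h L z‖} := by
    ext z
    simp [farReturnSet, imp_iff_not_or]
  rw [this]
  exact hD.nullMeasurableSet.inter <| .iInter fun L => .iInter fun _ =>
    ((hF.iterate L).measurable hD).compl.nullMeasurableSet.union <|
      aestronglyMeasurable_const.nullMeasurableSet_le
        (aestronglyMeasurable_birkhoffSum hF hh L).norm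

variable [NormedSpace ℝ E]

theorem nullMeasurableSet_rootGrowthSet (hF : MeasurePreserving F μ μ)
    (hh : AEStronglyMeasurable h μ) : NullMeasurableSet (rootGrowthSet F h η C) μ := by
  rw [rootGrowthSet, Set.ofPred_forall]
  exact .iInter fun k => (aestronglyMeasurable_birkhoffSum hF hh k).norm.nullMeasurableSet_le
    aestronglyMeasurable_const

variable [FiniteDimensional ℝ E] [Nontrivial E] [IsFiniteMeasure μ]

theorem measure_farReturnSet_inter_rootGrowthSet_le (hF : MeasurePreserving F μ μ)
    (hh : AEStronglyMeasurable h μ) (hD : MeasurableSet D) (hε : 0 < ε) (hη : 0 ≤ η)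
    (hC : 0 ≤ C) :
    μ (farReturnSet F h D ε ∩ rootGrowthSet F h η C)
      ≤ ENNReal.ofReal ((η / (ε / 2)) ^ finrank ℝ E) * μ Set.univ := by
  set d := finrank ℝ E
  have hd : d ≠ 0 := finrank_pos.ne'
  set b : ℕ → ℝ := fun N => ((η + (C + ε / 2) * ((N : ℝ) ^ (d⁻¹ : ℝ))⁻¹) / (ε / 2)) ^ d
  have hbound : ∀ N ≥ 1, μ (farReturnSet F h D ε ∩ rootGrowthSet F h η C)
      ≤ ENNReal.ofReal (b N) * μ Set.univ := by
    intro N hN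
    have hN' : (0 : ℝ) < N := by exact_mod_cast hN
    have hvisits := hF.natCast_mul_measure_le (N := N) (B := ENNReal.ofReal (N * b N))
      ((nullMeasurableSet_farReturnSet hF hh hD).inter (nullMeasurableSet_rootGrowthSet hF hh))
      fun y H hH => by
        have hcard := card_mul_pow_le_of_forall_mem hε hη hC hH
        rw [add_assoc, rpow_inv_natCast_mul_add_pow hN' hd] at hcard
        dsimp only [b]
        rw [← ENNReal.ofReal_natCast, div_pow, ← mul_div_assoc]
        exact ENNReal.ofReal_le_ofReal ((le_div_iff₀ (by positivity)).2 hcard)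
    rw [ENNReal.ofReal_mul hN'.le, ENNReal.ofReal_natCast, mul_assoc] at hvisits
    exact (ENNReal.mul_le_mul_iff_right (Nat.cast_ne_zero.2 (by omega))
      (ENNReal.natCast_ne_top N)).1 hvisits
  have hb : Tendsto b atTop (𝓝 ((η / (ε / 2)) ^ d)) := by
    have hroot : Tendsto (fun N : ℕ => ((N : ℝ) ^ (d⁻¹ : ℝ))⁻¹) atTop (𝓝 0) :=
      ((tendsto_rpow_atTop (by positivity)).comp tendsto_natCast_atTop_atTop).inv_tendsto_atTop
    simpa using ((tendsto_const_nhds (x := η)).add (hroot.const_mul (C + ε / 2))).div_const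
      (ε / 2) |>.pow d
  exact ge_of_tendsto (ENNReal.Tendsto.mul_const (ENNReal.tendsto_ofReal hb)
    (.inr (measure_ne_top μ _))) (eventually_atTop.2 ⟨1, hbound⟩)

theorem measure_farReturnSet_eq_zero (hF : MeasurePreserving F μ μ)
    (hh : AEStronglyMeasurable h μ)
    (hsub : ∀ᵐ y ∂μ, (fun k => birkhoffSum F h k y) =o[atTop]
      fun k : ℕ => (k : ℝ) ^ (finrank ℝ E : ℝ)⁻¹)
    (hD : MeasurableSet D) (hε : 0 < ε) : μ (farReturnSet F h D ε) = 0 := by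
  have hbound : ∀ η > 0, μ (farReturnSet F h D ε)
      ≤ ENNReal.ofReal ((η / (ε / 2)) ^ finrank ℝ E) * μ Set.univ := by
    intro η hη
    have hcover : farReturnSet F h D ε
        ≤ᵐ[μ] ⋃ C : ℕ, farReturnSet F h D ε ∩ rootGrowthSet F h η C := by
      filter_upwards [hsub] with y hy hyD
      obtain ⟨C, hC⟩ := exists_nat_mem_rootGrowthSet hη hy
      exact Set.mem_iUnion.2 ⟨C, hyD, hC⟩
    have hmono : Monotone fun C : ℕ => farReturnSet F h D ε ∩ rootGrowthSet F h η C :=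
      fun C C' hCC' =>
        Set.inter_subset_inter_right _ (rootGrowthSet_mono (by exact_mod_cast hCC'))
    calc μ (farReturnSet F h D ε) ≤ μ (⋃ C : ℕ, farReturnSet F h D ε ∩ rootGrowthSet F h η C) :=
          measure_mono_ae hcover
      _ = ⨆ C : ℕ, μ (farReturnSet F h D ε ∩ rootGrowthSet F h η C) :=
          hmono.directed_le.measure_iUnion
      _ ≤ _ := iSup_le fun C =>
          measure_farReturnSet_inter_rootGrowthSet_le hF hh hD hε hη.le C.cast_nonneg
  have hlim : Tendsto (fun η => ENNReal.ofReal ((η / (ε / 2)) ^ finrank ℝ E) * μ Set.univ)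
      (𝓝[>] 0) (𝓝 0) := by
    have : Tendsto (fun η : ℝ => (η / (ε / 2)) ^ finrank ℝ E) (𝓝 0) (𝓝 0) :=
      (by fun_prop : Continuous fun η : ℝ => (η / (ε / 2)) ^ finrank ℝ E).tendsto' 0 0
        (by simp [finrank_pos.ne'])
    simpa using ENNReal.Tendsto.mul_const
      (ENNReal.tendsto_ofReal (this.mono_left nhdsWithin_le_nhds)) (.inr (measure_ne_top μ _))
  exact le_antisymm (ge_of_tendsto hlim (eventually_nhdsWithin_of_forall hbound)) bot_le

theorem ae_exists_return_norm_birkhoffSum_lt (hF : MeasurePreserving F μ μ)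
    (hh : AEStronglyMeasurable h μ)
    (hsub : ∀ᵐ y ∂μ, (fun k => birkhoffSum F h k y) =o[atTop]
      fun k : ℕ => (k : ℝ) ^ (finrank ℝ E : ℝ)⁻¹)
    (hD : MeasurableSet D) :
    ∀ᵐ z ∂μ, z ∈ D → ∀ ε > 0, ∃ L, 0 < L ∧ F^[L] z ∈ D ∧ ‖birkhoffSum F h L z‖ < ε := by
  have hnull : ∀ᵐ z ∂μ, ∀ j : ℕ, z ∉ farReturnSet F h D (1 / (j + 1)) :=
    ae_all_iff.2 fun j => measure_eq_zero_iff_ae_notMem.1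
      (measure_farReturnSet_eq_zero hF hh hsub hD (by positivity))
  filter_upwards [hnull] with z hz hzD ε hε
  obtain ⟨j, hj⟩ := exists_nat_one_div_lt hε
  have := hz j
  simp only [farReturnSet, Set.mem_ofPred_eq, hzD, true_and, not_forall, not_le] at this
  obtain ⟨L, hL, hLD, hlt⟩ := this
  exact ⟨L, hL, hLD, hlt.trans hj⟩

end Measure

end JointRecurrence

open JointRecurrence in
/-- if `F` is ergodic for the probability measure `ν` and the integrable
function `f : Y → ℝ^n` satisfies `k^{-1/n} ‖S_k f(y) - k f_*(ν)‖ → 0` for `ν`-a.e. `y`,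
then `f` is joint recurrent: `ν(Ξ(D)) = ν(D)` for every measurable `D`, where `Ξ(D)` is the
set of `z ∈ D` such that for every `ε > 0` there is `L > 0` with `F^L(z) ∈ D` and
`‖S_L f(z) - L f_*(ν)‖ < ε`. -/
theorem stmt12 {Y : Type*} [MeasurableSpace Y] {n : ℕ} (hn : 0 < n)
    (ν : Measure Y) [IsProbabilityMeasure ν] (F : Y → Y)
    (hF : Ergodic F ν)
    (f : Y → EuclideanSpace ℝ (Fin n)) (hf : Integrable f ν)
    (hlim : ∀ᵐ y ∂ν, Tendsto
      (fun k : ℕ => (k : ℝ) ^ (-(1 / (n : ℝ))) *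
        ‖(∑ j ∈ Finset.range k, f (F^[j] y)) - (k : ℝ) • ∫ x, f x ∂ν‖)
      atTop (𝓝 0)) :
    ∀ D : Set Y, MeasurableSet D →
      ν {z ∈ D | ∀ ε > 0, ∃ L : ℕ, 0 < L ∧ F^[L] z ∈ D ∧
        ‖(∑ j ∈ Finset.range L, f (F^[j] z)) - (L : ℝ) • ∫ x, f x ∂ν‖ < ε} = ν D := by
  intro D hD
  set m := ∫ x, f x ∂ν
  have hsum : ∀ k z, (∑ j ∈ Finset.range k, f (F^[j] z)) - (k : ℝ) • m
      = birkhoffSum F (fun y => f y - m) k z := fun k z => by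
    rw [birkhoffSum_sub_const, Nat.cast_smul_eq_nsmul]
    rfl
  have : Nonempty (Fin n) := ⟨⟨0, hn⟩⟩
  have hsub : ∀ᵐ y ∂ν, (fun k => birkhoffSum F (fun y => f y - m) k y) =o[atTop]
      fun k : ℕ => (k : ℝ) ^ (finrank ℝ (EuclideanSpace ℝ (Fin n)) : ℝ)⁻¹ := by
    filter_upwards [hlim] with y hy
    rw [finrank_euclideanSpace_fin]
    refine isLittleO_rpow_of_tendsto_rpow_neg_mul_norm ?_
    simpa only [hsum, one_div] using hy
  have hreturn := ae_exists_return_norm_birkhoffSum_lt (h := fun y => f y - m)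
    hF.toMeasurePreserving (hf.1.sub aestronglyMeasurable_const) hsub hD
  refine measure_eq_measure_of_null_sdiff (fun z hz => hz.1)
    (measure_mono_null ?_ (ae_iff.1 hreturn))
  rintro z ⟨hzD, hz⟩ hret
  exact hz ⟨hzD, by simpa only [hsum] using hret hzD⟩
end

section
/- Let σ : Σ → Σ be a subshift of finite type and φ : Σ → ℚ^n a locally constant function. Given r ∈ φ_*(M_σ) ∩ ℚ^n, if the fiber φ_*^{-1}(r) contains an ergodic measure with respect to which φ is joint recurrent, then φ_*^{-1}(r) also contains a periodic probability measure. -/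
open MeasureTheory Filter Topology Set

/-- The left shift on the full shift space `{1,…,N}^ℕ`. -/
def Shift {N : ℕ} : (ℕ → Fin N) → (ℕ → Fin N) := fun x i => x (i + 1)

/-- `S` is a subshift of finite type: it is the set of sequences all of whose transitions
are allowed by some transition relation `M`. -/
def IsSubshiftFT {N : ℕ} (S : Set (ℕ → Fin N)) : Prop :=
  ∃ M : Fin N → Fin N → Prop, S = {x | ∀ i, M (x i) (x (i + 1))}

/-- The Birkhoff sum `S_k f` for the shift. -/
def birkhoff {N : ℕ} {E : Type*} [AddCommMonoid E] (k : ℕ) (f : (ℕ → Fin N) → E)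
    (x : ℕ → Fin N) : E :=
  ∑ j ∈ Finset.range k, f (Shift^[j] x)

open Classical in
/-- The metric `d(x,y) = λ^{min{j : x_j ≠ y_j}}` on the shift space. -/
noncomputable def sdist {N : ℕ} (lam : ℝ) (x y : ℕ → Fin N) : ℝ :=
  if x = y then 0 else lam ^ sInf {j | x j ≠ y j}

/-- `f` is a Walters function on `S` (for the metric with parameter `λ`): there is
`H : ℝ₊ → ℝ₊ ∪ {+∞}` increasing, null and continuous at zero, such that `d_k(x,y) ≤ s`
implies `|S_k f(x) - S_k f(y)| ≤ H(s)`. -/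
def IsWalters {N : ℕ} (S : Set (ℕ → Fin N)) (lam : ℝ) (f : (ℕ → Fin N) → ℝ) : Prop :=
  ∃ H : ℝ → ENNReal, Monotone H ∧ H 0 = 0 ∧ Tendsto H (nhdsWithin 0 (Ioi 0)) (nhds 0) ∧
    ∀ s : ℝ, 0 ≤ s → ∀ k : ℕ, 0 < k → ∀ x ∈ S, ∀ y ∈ S,
      (∀ j < k, sdist lam (Shift^[j] x) (Shift^[j] y) ≤ s) →
      ENNReal.ofReal |birkhoff k f x - birkhoff k f y| ≤ H s

/-- A function on the shift space is locally constant if it depends on finitely many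
coordinates. -/
def LocallyConstantFn {N : ℕ} {E : Type*} (f : (ℕ → Fin N) → E) : Prop :=
  ∃ j : ℕ, ∀ x y : ℕ → Fin N, (∀ i ≤ j, x i = y i) → f x = f y

/-- The set `M_σ` of shift-invariant Borel probability measures giving full mass to the
subshift `S`. -/
def MS {N : ℕ} (S : Set (ℕ → Fin N)) : Set (ProbabilityMeasure (ℕ → Fin N)) :=
  {μ | (μ : Measure (ℕ → Fin N)).map Shift = (μ : Measure (ℕ → Fin N)) ∧
    (μ : Measure (ℕ → Fin N)) S = 1}

/-- `μ` is a periodic probability measure of the subshift `S`: the uniform probability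
measure on the orbit of a periodic point of `S`. -/
def IsPeriodicMeasure {N : ℕ} (S : Set (ℕ → Fin N)) (μ : ProbabilityMeasure (ℕ → Fin N)) :
    Prop :=
  ∃ z ∈ S, ∃ M : ℕ, 0 < M ∧ Shift^[M] z = z ∧
    (μ : Measure (ℕ → Fin N)) =
      (M : ENNReal)⁻¹ • ∑ j ∈ Finset.range M, Measure.dirac (Shift^[j] z)

/-- `f` is joint recurrent with respect to the measure `ν`: for every measurable `D`,
`ν(Ξ(D)) = ν(D)`, where `Ξ(D)` is the set of `z ∈ D` such that for every `ε > 0` there is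
`L > 0` with `σ^L(z) ∈ D` and `‖S_L f(z) - L f_*(ν)‖ < ε`. -/
def JointRec {N n : ℕ} (f : (ℕ → Fin N) → EuclideanSpace ℝ (Fin n))
    (ν : Measure (ℕ → Fin N)) : Prop :=
  ∀ D : Set (ℕ → Fin N), MeasurableSet D →
    ν {z ∈ D | ∀ ε > 0, ∃ L : ℕ, 0 < L ∧ Shift^[L] z ∈ D ∧
      ‖birkhoff L f z - (L : ℝ) • ∫ x, f x ∂ν‖ < ε} = ν D

/-! A locally constant rational `φ` takes finitely many values, so these values and `r` all lie
in the lattice `D⁻¹ ℤⁿ` for a common denominator `D`. Joint recurrence, applied to a cylinder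
`[a₀ … a_j]` of positive measure that determines `φ`, yields a point `z` returning to the
cylinder at a time `L` with `‖S_L φ z - L r‖ < D⁻¹`; as `S_L φ z - L r` lies in the lattice, it
vanishes. Repeating the word `z₀ … z_{L-1}` gives a periodic point of the subshift (the closing
transition `z_{L-1} → z_L = z₀` is allowed), whose Birkhoff sum over one period is still
`S_L φ z = L r` because `φ` sees only `j + 1` coordinates; its orbit measure therefore has
rotation vector `r`. -/

lemma shift_iterate_apply {N : ℕ} (m : ℕ) (x : ℕ → Fin N) (i : ℕ) :
    Shift^[m] x i = x (i + m) := by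
  induction m generalizing x with
  | zero => rfl
  | succ m ih => rw [Function.iterate_succ_apply, ih]; rfl

lemma measurable_shift {N : ℕ} : Measurable (Shift (N := N)) :=
  measurable_pi_lambda _ fun i => measurable_pi_apply (i + 1)

namespace IsSubshiftFT

variable {N : ℕ} {S : Set (ℕ → Fin N)}

lemma measurableSet (hS : IsSubshiftFT S) : MeasurableSet S := by
  obtain ⟨M, rfl⟩ := hS
  simp only [ofPred_forall]
  exact .iInter fun i => MeasurableSet.preimage (f := fun x : ℕ → Fin N => (x i, x (i + 1)))
    (to_countable {p : Fin N × Fin N | M p.1 p.2}).measurableSet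
    ((measurable_pi_apply i).prodMk (measurable_pi_apply (i + 1)))

lemma mem_of_forall_exists_transition (hS : IsSubshiftFT S) {z w : ℕ → Fin N} (hz : z ∈ S)
    (hw : ∀ i, ∃ k, w i = z k ∧ w (i + 1) = z (k + 1)) : w ∈ S := by
  obtain ⟨M, rfl⟩ := hS
  intro i
  obtain ⟨k, hk, hk'⟩ := hw i
  rw [hk, hk']
  exact hz k

lemma iterate_shift_mem (hS : IsSubshiftFT S) {z : ℕ → Fin N} (hz : z ∈ S) (m : ℕ) :
    Shift^[m] z ∈ S :=
  hS.mem_of_forall_exists_transition hz fun i =>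
    ⟨i + m, shift_iterate_apply m z i, by rw [shift_iterate_apply, Nat.add_right_comm]⟩

lemma mod_mem (hS : IsSubshiftFT S) {z : ℕ → Fin N} (hz : z ∈ S) {L : ℕ} (hL : 0 < L)
    (hzL : z L = z 0) : (fun i => z (i % L)) ∈ S := by
  refine hS.mem_of_forall_exists_transition hz fun i => ⟨i % L, rfl, ?_⟩
  rw [← Nat.mod_add_mod]
  rcases Nat.lt_or_eq_of_le (Nat.mod_lt i hL) with hlt | heq
  · rw [Nat.mod_eq_of_lt hlt]
  · rw [show i % L + 1 = L from heq, Nat.mod_self, hzL]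

end IsSubshiftFT

lemma apply_mod_eq_of_forall_le {α : Type*} {z : ℕ → α} {L j : ℕ} (hL : 0 < L)
    (hz : ∀ i ≤ j, z (i + L) = z i) : ∀ i ≤ L + j, z (i % L) = z i := by
  intro i
  induction i using Nat.strong_induction_on with
  | _ i ih =>
    intro hi
    rcases lt_or_ge i L with hiL | hLi
    · rw [Nat.mod_eq_of_lt hiL]
    · rw [Nat.mod_eq_sub_mod hLi, ih (i - L) (by omega) (by omega),
        ← hz (i - L) (by omega), Nat.sub_add_cancel hLi]

lemma iterate_shift_mod {N : ℕ} (z : ℕ → Fin N) (L : ℕ) :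
    Shift^[L] (fun i => z (i % L)) = fun i => z (i % L) := by
  funext i
  rw [shift_iterate_apply, Nat.add_mod_right]

section OrbitMeasure

open scoped ENNReal

variable {N : ℕ}

noncomputable def orbitMeasure (L : ℕ) (w : ℕ → Fin N) : Measure (ℕ → Fin N) :=
  (L : ℝ≥0∞)⁻¹ • ∑ m ∈ Finset.range L, Measure.dirac (Shift^[m] w)

lemma orbitMeasure_apply_of_forall_mem {L : ℕ} (hL : 0 < L) {w : ℕ → Fin N}
    {s : Set (ℕ → Fin N)} (hw : ∀ m, Shift^[m] w ∈ s) : orbitMeasure L w s = 1 := by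
  simp only [orbitMeasure, Measure.smul_apply, Measure.finsetSum_apply,
    Measure.dirac_apply_of_mem (hw _), Finset.sum_const, Finset.card_range, nsmul_one,
    smul_eq_mul]
  exact ENNReal.inv_mul_cancel (by exact_mod_cast hL.ne') (ENNReal.natCast_ne_top L)

lemma isProbabilityMeasure_orbitMeasure {L : ℕ} (hL : 0 < L) (w : ℕ → Fin N) :
    IsProbabilityMeasure (orbitMeasure L w) :=
  ⟨orbitMeasure_apply_of_forall_mem hL fun _ => mem_univ _⟩

lemma map_shift_orbitMeasure {L : ℕ} {w : ℕ → Fin N} (hw : Shift^[L] w = w) :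
    (orbitMeasure L w).map Shift = orbitMeasure L w := by
  have hpush : ∀ m, (Measure.dirac (Shift^[m] w)).map Shift = Measure.dirac (Shift^[m + 1] w) :=
    fun m => by rw [Measure.map_dirac' measurable_shift, Function.iterate_succ_apply']
  have hcycle : ∑ m ∈ Finset.range L, Measure.dirac (Shift^[m + 1] w) =
      ∑ m ∈ Finset.range L, Measure.dirac (Shift^[m] w) := by
    cases L with
    | zero => simp only [Finset.range_zero, Finset.sum_empty]
    | succ K =>
      rw [Finset.sum_range_succ, hw, Finset.sum_range_succ' (fun m => Measure.dirac (Shift^[m] w)),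
        Function.iterate_zero_apply]
  rw [orbitMeasure, ← Measure.mapₗ_apply_of_measurable measurable_shift, map_smul, map_sum]
  simp only [Measure.mapₗ_apply_of_measurable measurable_shift, hpush, hcycle]

lemma integral_orbitMeasure {E : Type*} [NormedAddCommGroup E] [NormedSpace ℝ E] [CompleteSpace E]
    (f : (ℕ → Fin N) → E) (L : ℕ) (w : ℕ → Fin N) :
    ∫ x, f x ∂orbitMeasure L w = (L : ℝ)⁻¹ • birkhoff L f w := by
  rw [orbitMeasure, integral_smul_measure,
    integral_finsetSum_measure fun m _ => integrable_dirac enorm_lt_top]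
  simp only [integral_dirac, birkhoff, ENNReal.toReal_inv, ENNReal.toReal_natCast]

end OrbitMeasure

section LocallyConstant

variable {N : ℕ} {E : Type*}

lemma LocallyConstantFn.finite_range {f : (ℕ → Fin N) → E} (hf : LocallyConstantFn f) :
    (range f).Finite := by
  obtain ⟨j, hj⟩ := hf
  refine (Set.finite_range fun b : Fin (j + 1) → Fin N =>
    f fun i => b ⟨min i j, Nat.lt_succ_of_le (min_le_right i j)⟩).subset ?_
  rintro _ ⟨x, rfl⟩
  exact ⟨fun i => x i, hj _ _ fun i hi => by simp [min_eq_left hi]⟩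

lemma birkhoff_eq_of_forall_lt [AddCommMonoid E] {f : (ℕ → Fin N) → E} {j : ℕ}
    (hj : ∀ x y : ℕ → Fin N, (∀ i ≤ j, x i = y i) → f x = f y) {L : ℕ} {x y : ℕ → Fin N}
    (hxy : ∀ i < L + j, x i = y i) : birkhoff L f x = birkhoff L f y :=
  Finset.sum_congr rfl fun m hm => hj _ _ fun i hi => by
    rw [shift_iterate_apply, shift_iterate_apply]
    exact hxy _ (by have := Finset.mem_range.1 hm; omega)

end LocallyConstant

lemma Rat.cast_mem_zmultiples_inv {q : ℚ} {D : ℕ} (hD : D ≠ 0) (hqD : q.den ∣ D) :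
    (q : ℝ) ∈ AddSubgroup.zmultiples ((D : ℝ)⁻¹) := by
  obtain ⟨k, rfl⟩ := hqD
  have hk : (k : ℝ) ≠ 0 := by exact_mod_cast right_ne_zero_of_mul hD
  refine AddSubgroup.mem_zmultiples_iff.2 ⟨q.num * k, ?_⟩
  rw [zsmul_eq_mul, Rat.cast_def]
  push_cast
  field_simp

lemma exists_forall_apply_mem_zmultiples_inv {ι : Type*} [Fintype ι]
    {V : Set (EuclideanSpace ℝ ι)} (hV : V.Finite) (hQ : ∀ v ∈ V, ∀ i, ∃ q : ℚ, v i = q) :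
    ∃ D : ℕ, 0 < D ∧ ∀ v ∈ V, ∀ i, v i ∈ AddSubgroup.zmultiples ((D : ℝ)⁻¹) := by
  choose! q hq using hQ
  refine ⟨∏ v ∈ hV.toFinset, ∏ i, (q v i).den,
    Finset.prod_pos fun v _ => Finset.prod_pos fun i _ => (q v i).den_pos, fun v hv i => ?_⟩
  rw [hq v hv i]
  refine Rat.cast_mem_zmultiples_inv (Finset.prod_ne_zero_iff.2 fun v _ =>
    Finset.prod_ne_zero_iff.2 fun i _ => (q v i).den_nz) ?_
  exact (Finset.dvd_prod_of_mem _ (Finset.mem_univ i)).trans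
    (Finset.dvd_prod_of_mem (fun v => ∏ i, (q v i).den) (hV.mem_toFinset.2 hv))

lemma EuclideanSpace.eq_zero_of_norm_lt_of_forall_mem_zmultiples {ι : Type*} [Fintype ι]
    {v : EuclideanSpace ℝ ι} {c : ℝ} (hv : ∀ i, v i ∈ AddSubgroup.zmultiples c)
    (hvc : ‖v‖ < c) : v = 0 := by
  ext i
  obtain ⟨k, hk⟩ := AddSubgroup.mem_zmultiples_iff.1 (hv i)
  have hc : 0 < c := (norm_nonneg v).trans_lt hvc
  have hkc : |(k : ℝ)| * c < 1 * c := by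
    calc |(k : ℝ)| * c = |v i| := by rw [← hk, zsmul_eq_mul, abs_mul, abs_of_pos hc]
      _ ≤ ‖v‖ := PiLp.norm_apply_le v i
      _ < 1 * c := by rwa [one_mul]
  have hk0 : k = 0 := Int.abs_lt_one_iff.1 (by exact_mod_cast lt_of_mul_lt_mul_right hkc hc.le)
  rw [← hk, hk0, zero_smul, PiLp.zero_apply]

lemma birkhoff_apply {N : ℕ} {ι : Type*} (f : (ℕ → Fin N) → EuclideanSpace ℝ ι) (L : ℕ)
    (x : ℕ → Fin N) (i : ι) : birkhoff L f x i = birkhoff L (fun y => f y i) x := by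
  simp only [birkhoff, WithLp.ofLp_sum, Finset.sum_apply]

lemma birkhoff_eq_smul_of_norm_sub_lt {N : ℕ} {ι : Type*} [Fintype ι]
    {f : (ℕ → Fin N) → EuclideanSpace ℝ ι} {r : EuclideanSpace ℝ ι} {c : ℝ}
    (hf : ∀ x i, f x i ∈ AddSubgroup.zmultiples c) (hr : ∀ i, r i ∈ AddSubgroup.zmultiples c)
    {L : ℕ} {z : ℕ → Fin N} (hz : ‖birkhoff L f z - (L : ℝ) • r‖ < c) :
    birkhoff L f z = (L : ℝ) • r := by
  refine sub_eq_zero.1 (EuclideanSpace.eq_zero_of_norm_lt_of_forall_mem_zmultiples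
    (fun i => ?_) hz)
  rw [PiLp.sub_apply, PiLp.smul_apply, birkhoff_apply, Nat.cast_smul_eq_nsmul]
  exact sub_mem (sum_mem fun m _ => hf _ i) (nsmul_mem (hr i) L)

lemma JointRec.exists_return {N n : ℕ} {φ : (ℕ → Fin N) → EuclideanSpace ℝ (Fin n)}
    {ν : Measure (ℕ → Fin N)} (hjr : JointRec φ ν) {S : Set (ℕ → Fin N)}
    (hS : MeasurableSet S) (hνS : ν S ≠ 0) (j : ℕ) {ε : ℝ} (hε : 0 < ε) :
    ∃ z ∈ S, ∃ L, 0 < L ∧ (∀ i ≤ j, z (i + L) = z i) ∧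
      ‖birkhoff L φ z - (L : ℝ) • ∫ x, φ x ∂ν‖ < ε := by
  let ρ : (ℕ → Fin N) → (Fin (j + 1) → Fin N) := fun x i => x i
  have hρ : Measurable ρ := measurable_pi_lambda _ fun i => measurable_pi_apply _
  obtain ⟨a, ha⟩ : ∃ a, ν (S ∩ ρ ⁻¹' {a}) ≠ 0 := by
    by_contra! h
    have hcover : S ⊆ ⋃ a, S ∩ ρ ⁻¹' {a} := fun x hx => mem_iUnion.2 ⟨ρ x, hx, rfl⟩
    exact hνS (measure_mono_null hcover (measure_iUnion_null h))
  rw [← hjr _ (hS.inter (hρ (measurableSet_singleton a)))] at ha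
  obtain ⟨z, ⟨hzS, hza⟩, hrec⟩ := nonempty_of_measure_ne_zero ha
  obtain ⟨L, hL, ⟨-, hzLa⟩, hnorm⟩ := hrec ε hε
  refine ⟨z, hzS, L, hL, fun i hi => ?_, hnorm⟩
  have hcoord : Shift^[L] z i = z i := congrFun (hzLa.trans hza.symm) ⟨i, Nat.lt_succ_of_le hi⟩
  rwa [shift_iterate_apply] at hcoord

lemma exists_periodicMeasure_of_birkhoff_eq {N : ℕ} {E : Type*} [NormedAddCommGroup E]
    [NormedSpace ℝ E] [CompleteSpace E] {S : Set (ℕ → Fin N)} (hS : IsSubshiftFT S)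
    {f : (ℕ → Fin N) → E} {j : ℕ} (hj : ∀ x y : ℕ → Fin N, (∀ i ≤ j, x i = y i) → f x = f y)
    {z : ℕ → Fin N} (hz : z ∈ S) {L : ℕ} (hL : 0 < L) (hzL : ∀ i ≤ j, z (i + L) = z i)
    {r : E} (hr : birkhoff L f z = (L : ℝ) • r) :
    ∃ μ : ProbabilityMeasure (ℕ → Fin N), μ ∈ MS S ∧ IsPeriodicMeasure S μ ∧
      ∫ x, f x ∂(μ : Measure (ℕ → Fin N)) = r := by
  set w : ℕ → Fin N := fun i => z (i % L)
  have hw : w ∈ S := hS.mod_mem hz hL (by simpa using hzL 0 (Nat.zero_le j))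
  have hwL : Shift^[L] w = w := iterate_shift_mod z L
  have hwz : birkhoff L f w = birkhoff L f z :=
    birkhoff_eq_of_forall_lt hj fun i hi => apply_mod_eq_of_forall_le hL hzL i hi.le
  refine ⟨⟨orbitMeasure L w, isProbabilityMeasure_orbitMeasure hL w⟩,
    ⟨map_shift_orbitMeasure hwL, orbitMeasure_apply_of_forall_mem hL (hS.iterate_shift_mem hw)⟩,
    ⟨w, hw, L, hL, hwL, rfl⟩, ?_⟩
  rw [ProbabilityMeasure.coe_mk, integral_orbitMeasure, hwz, hr, smul_smul,
    inv_mul_cancel₀ (by positivity), one_smul]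

theorem stmt14_general {N n : ℕ} (S : Set (ℕ → Fin N)) (hS : IsSubshiftFT S)
    (φ : (ℕ → Fin N) → EuclideanSpace ℝ (Fin n))
    (hφlc : LocallyConstantFn φ) (hφQ : ∀ x i, ∃ q : ℚ, φ x i = (q : ℝ))
    (r : EuclideanSpace ℝ (Fin n)) (hrQ : ∀ i, ∃ q : ℚ, r i = (q : ℝ))
    (ν : ProbabilityMeasure (ℕ → Fin N)) (hν : ν ∈ MS S)
    (hνr : ∫ x, φ x ∂(ν : Measure (ℕ → Fin N)) = r)
    (hjr : JointRec φ (ν : Measure (ℕ → Fin N))) :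
    ∃ μ : ProbabilityMeasure (ℕ → Fin N), μ ∈ MS S ∧ IsPeriodicMeasure S μ ∧
      ∫ x, φ x ∂(μ : Measure (ℕ → Fin N)) = r := by
  obtain ⟨D, hD, hlattice⟩ := exists_forall_apply_mem_zmultiples_inv
    (hφlc.finite_range.insert r) (by rintro v (rfl | ⟨x, rfl⟩); exacts [hrQ, hφQ x])
  obtain ⟨j, hj⟩ := hφlc
  obtain ⟨z, hzS, L, hL, hzL, hnorm⟩ := hjr.exists_return hS.measurableSet
    (by rw [hν.2]; exact one_ne_zero) j (ε := (D : ℝ)⁻¹) (by positivity)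
  rw [hνr] at hnorm
  have hsum : birkhoff L φ z = (L : ℝ) • r := birkhoff_eq_smul_of_norm_sub_lt
    (fun x => hlattice _ (mem_insert_of_mem _ (mem_range_self x))) (hlattice r (mem_insert _ _))
    hnorm
  exact exists_periodicMeasure_of_birkhoff_eq hS hj hzS hL hzL hsum

/-- on a subshift of finite type, if `φ` is locally constant with rational
values, `r ∈ φ_*(M_σ) ∩ ℚ^n`, and the fiber `φ_*^{-1}(r)` contains an ergodic measure with
respect to which `φ` is joint recurrent, then the fiber also contains a periodic probability
measure. -/
theorem stmt14 {N n : ℕ} (S : Set (ℕ → Fin N)) (hS : IsSubshiftFT S)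
    (φ : (ℕ → Fin N) → EuclideanSpace ℝ (Fin n)) (hφm : Measurable φ)
    (hφlc : LocallyConstantFn φ) (hφQ : ∀ x i, ∃ q : ℚ, φ x i = (q : ℝ))
    (r : EuclideanSpace ℝ (Fin n)) (hrQ : ∀ i, ∃ q : ℚ, r i = (q : ℝ))
    (ν : ProbabilityMeasure (ℕ → Fin N)) (hν : ν ∈ MS S)
    (hνerg : Ergodic Shift (ν : Measure (ℕ → Fin N)))
    (hνr : ∫ x, φ x ∂(ν : Measure (ℕ → Fin N)) = r)
    (hjr : JointRec φ (ν : Measure (ℕ → Fin N))) :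
    ∃ μ : ProbabilityMeasure (ℕ → Fin N), μ ∈ MS S ∧ IsPeriodicMeasure S μ ∧
      ∫ x, φ x ∂(μ : Measure (ℕ → Fin N)) = r :=
  stmt14_general S hS φ hφlc hφQ r hrQ ν hν hνr hjr
end
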